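/- arXiv:math/0612848 — 5 statements merged into one kernel-verified Lean document; each statement's English description precedes it below -/
import Mathlib

section
/- Let Δ be the simplicial complex on the vertex set [2m+1] whose Stanley-Reisner ideal is generated by the monomials y_i y_{i+1} ··· y_{i+m-1} for i = 1,...,2m+1 (indices taken modulo 2m+1). Then a subset F ⊆ [2m+1] is a facet of Δ if and only if F = [2m+1]\{a_1,a_2,a_3} with a_1 < a_2 < a_3 satisfying a_2 - a_1 < m+1, a_3 - a_2 < m+1, and a_3 - a_1 > m. -/
/-- The cyclic interval `{i, i+1, …, i+m-1}` in `[2m+1] = {1,…,2m+1}`, indices taken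
modulo `2m+1` (with representatives in `{1,…,2m+1}`). -/
def cycInterval (m i : ℕ) : Finset ℕ :=
  (Finset.Ico i (i + m)).image (fun k => if k ≤ 2 * m + 1 then k else k - (2 * m + 1))

/-- The simplicial complex on `[2m+1]` whose faces are the subsets containing no cyclic
interval `{i,…,i+m-1}`; its Stanley–Reisner ideal is generated by the monomials
`y_i y_{i+1} ⋯ y_{i+m-1}`, `i = 1,…,2m+1`. -/
def cycComplex (m : ℕ) : Set (Finset ℕ) :=
  {F | F ⊆ Finset.Icc 1 (2 * m + 1) ∧
    ∀ i ∈ Finset.Icc 1 (2 * m + 1), ¬ cycInterval m i ⊆ F}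

/-- Arithmetic characterization of membership in a cyclic interval. -/
def memCond (m i x : ℕ) : Prop :=
  (i ≤ x ∧ x < i + m ∧ x ≤ 2 * m + 1) ∨ (1 ≤ x ∧ x + m + 1 < i)

lemma mem_cycInterval {m i : ℕ} (hi1 : 1 ≤ i) (hi2 : i ≤ 2 * m + 1) (x : ℕ) :
    x ∈ cycInterval m i ↔ memCond m i x := by
  unfold cycInterval memCond
  simp only [Finset.mem_image, Finset.mem_Ico]
  constructor
  · rintro ⟨k, ⟨hk1, hk2⟩, rfl⟩
    split_ifs with h <;> omega
  · rintro (h | h)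
    · exact ⟨x, by omega, by split_ifs <;> omega⟩
    · exact ⟨x + (2 * m + 1), by omega, by split_ifs <;> omega⟩

/-- `F` is a facet of the complex `Δ = cycComplex m` iff
`F = [2m+1] \ {a₁,a₂,a₃}` with `a₁ < a₂ < a₃` in `[2m+1]`, `a₂ - a₁ < m+1`,
`a₃ - a₂ < m+1` and `a₃ - a₁ > m`. -/
theorem facets_of_cyclic_gorenstein_complex (m : ℕ) (hm : 1 ≤ m) (F : Finset ℕ) :
    (F ∈ cycComplex m ∧ ∀ G ∈ cycComplex m, F ⊆ G → F = G) ↔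
      ∃ a₁ a₂ a₃ : ℕ,
        a₁ ∈ Finset.Icc 1 (2 * m + 1) ∧ a₂ ∈ Finset.Icc 1 (2 * m + 1) ∧
        a₃ ∈ Finset.Icc 1 (2 * m + 1) ∧ a₁ < a₂ ∧ a₂ < a₃ ∧
        a₂ - a₁ < m + 1 ∧ a₃ - a₂ < m + 1 ∧ a₃ - a₁ > m ∧
        F = Finset.Icc 1 (2 * m + 1) \ {a₁, a₂, a₃} := by
  constructor
  · rintro ⟨⟨hFsub, hcov⟩, hmax⟩
    set T : Finset ℕ := Finset.Icc 1 (2 * m + 1) \ F with hTdef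
    have hTmem : ∀ t, t ∈ T ↔ (1 ≤ t ∧ t ≤ 2 * m + 1 ∧ t ∉ F) := by
      intro t
      rw [hTdef, Finset.mem_sdiff, Finset.mem_Icc]
      tauto
    -- every cyclic interval is hit by T
    have hit : ∀ i, 1 ≤ i → i ≤ 2 * m + 1 → ∃ t ∈ T, memCond m i t := by
      intro i h1 h2
      have h := hcov i (Finset.mem_Icc.mpr ⟨h1, h2⟩)
      rw [Finset.not_subset] at h
      obtain ⟨t, htI, htF⟩ := h
      rw [mem_cycInterval h1 h2] at htI
      refine ⟨t, (hTmem t).mpr ⟨?_, ?_, htF⟩, htI⟩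
      · unfold memCond at htI; omega
      · unfold memCond at htI; omega
    -- necessity: every element of T is the unique T-element of some interval
    have nec : ∀ t ∈ T, ∃ i, 1 ≤ i ∧ i ≤ 2 * m + 1 ∧ memCond m i t ∧
        ∀ s ∈ T, memCond m i s → s = t := by
      intro t ht
      obtain ⟨ht1, ht2, htF⟩ := (hTmem t).mp ht
      have hne : F ≠ insert t F := by
        intro h
        exact htF (h ▸ Finset.mem_insert_self t F)
      have hG : insert t F ∉ cycComplex m := fun hmem =>
        hne (hmax _ hmem (Finset.subset_insert t F))
      simp only [cycComplex, Set.mem_setOf_eq] at hG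
      push_neg at hG
      have hsub : insert t F ⊆ Finset.Icc 1 (2 * m + 1) :=
        Finset.insert_subset (Finset.mem_Icc.mpr ⟨ht1, ht2⟩) hFsub
      obtain ⟨i, hiIcc, hIsub⟩ := hG hsub
      rw [Finset.mem_Icc] at hiIcc
      refine ⟨i, hiIcc.1, hiIcc.2, ?_, ?_⟩
      · have h := hcov i (Finset.mem_Icc.mpr hiIcc)
        rw [Finset.not_subset] at h
        obtain ⟨s, hsI, hsF⟩ := h
        have hsG := hIsub hsI
        rw [Finset.mem_insert] at hsG
        have hst : s = t := by tauto
        rw [← mem_cycInterval hiIcc.1 hiIcc.2]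
        exact hst ▸ hsI
      · intro s hs hsmem
        have hsI : s ∈ cycInterval m i := (mem_cycInterval hiIcc.1 hiIcc.2 s).mpr hsmem
        have := hIsub hsI
        rw [Finset.mem_insert] at this
        rcases this with h | h
        · exact h
        · exact absurd h ((hTmem s).mp hs).2.2
    -- T is nonempty: a₁ := min T
    obtain ⟨t0, ht0, _⟩ := hit 1 (le_refl 1) (by omega)
    have hTne : T.Nonempty := ⟨t0, ht0⟩
    set a1 := T.min' hTne with ha1def
    have ha1T : a1 ∈ T := T.min'_mem hTne
    have ha1min : ∀ t ∈ T, a1 ≤ t := fun t ht => T.min'_le t ht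
    obtain ⟨ha11, ha12, ha1F⟩ := (hTmem a1).mp ha1T
    have ha1lt : a1 ≤ 2 * m := by
      by_contra h
      obtain ⟨t, htT, htm⟩ := hit 1 (le_refl 1) (by omega)
      have h1 := ha1min t htT
      have h2 := ((hTmem t).mp htT).2.1
      unfold memCond at htm
      omega
    -- a₂ := min (T \ {a₁})
    obtain ⟨t1, ht1T, ht1m⟩ := hit (a1 + 1) (by omega) (by omega)
    have ht1gt : a1 < t1 := by
      have := ha1min t1 ht1T
      unfold memCond at ht1m
      omega
    have hEne : (T.erase a1).Nonempty := ⟨t1, Finset.mem_erase.mpr ⟨by omega, ht1T⟩⟩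
    set a2 := (T.erase a1).min' hEne with ha2def
    have ha2E : a2 ∈ T.erase a1 := Finset.min'_mem _ _
    have ha2T : a2 ∈ T := (Finset.mem_erase.mp ha2E).2
    have ha2min : ∀ t ∈ T, t ≠ a1 → a2 ≤ t := fun t ht hne =>
      Finset.min'_le _ t (Finset.mem_erase.mpr ⟨hne, ht⟩)
    have ha12lt : a1 < a2 :=
      lt_of_le_of_ne (ha1min a2 ha2T) (Ne.symm (Finset.mem_erase.mp ha2E).1)
    -- a₃ := max T
    set a3 := T.max' hTne with ha3def
    have ha3T : a3 ∈ T := T.max'_mem hTne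
    have ha3max : ∀ t ∈ T, t ≤ a3 := fun t ht => T.le_max' t ht
    obtain ⟨ha21, ha22, ha2F⟩ := (hTmem a2).mp ha2T
    obtain ⟨ha31, ha32, ha3F⟩ := (hTmem a3).mp ha3T
    -- gap 0: a₂ ≤ a₁ + m
    have hg0 : a2 ≤ a1 + m := by
      by_contra h
      obtain ⟨t, htT, htm⟩ := hit (a1 + 1) (by omega) (by omega)
      have h1 := ha1min t htT
      unfold memCond at htm
      have htne : t ≠ a1 := by omega
      have h2 := ha2min t htT htne
      omega
    -- wrap gap: a₁ + m + 1 ≤ a₃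
    have hgA : a1 + m + 1 ≤ a3 := by
      by_contra h
      rcases le_or_gt a3 (2 * m) with h3 | h3
      · obtain ⟨t, htT, htm⟩ := hit (a3 + 1) (by omega) (by omega)
        have h1 := ha1min t htT
        have h2 := ha3max t htT
        unfold memCond at htm
        omega
      · obtain ⟨t, htT, htm⟩ := hit 1 (le_refl 1) (by omega)
        have h1 := ha1min t htT
        unfold memCond at htm
        omega
    have ha23lt : a2 < a3 := by
      have := ha3max a2 ha2T
      omega
    -- gap 1: a₃ ≤ a₂ + m, from the necessity of a₁
    have hg1 : a3 ≤ a2 + m := by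
      obtain ⟨i, hi1, hi2, hmem, huniq⟩ := nec a1 ha1T
      have n2 : ¬ memCond m i a2 := fun h => absurd (huniq a2 ha2T h) (by omega)
      have n3 : ¬ memCond m i a3 := fun h => absurd (huniq a3 ha3T h) (by omega)
      unfold memCond at hmem n2 n3
      omega
    -- no fourth element
    have hsub3 : ∀ t ∈ T, t = a1 ∨ t = a2 ∨ t = a3 := by
      intro t ht
      by_contra hc
      push_neg at hc
      obtain ⟨hne1, hne2, hne3⟩ := hc
      have htb1 := ha1min t ht
      have htb2 := ha2min t ht hne1
      have htb3 := ha3max t ht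
      obtain ⟨i, hi1, hi2, hmem, huniq⟩ := nec t ht
      have n2 : ¬ memCond m i a2 := fun h => absurd (huniq a2 ha2T h) (fun h' => hne2 h'.symm)
      have n3 : ¬ memCond m i a3 := fun h => absurd (huniq a3 ha3T h) (fun h' => hne3 h'.symm)
      unfold memCond at hmem n2 n3
      omega
    refine ⟨a1, a2, a3, Finset.mem_Icc.mpr ⟨ha11, ha12⟩, Finset.mem_Icc.mpr ⟨ha21, ha22⟩,
      Finset.mem_Icc.mpr ⟨ha31, ha32⟩, ha12lt, ha23lt, by omega, by omega, by omega, ?_⟩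
    ext x
    simp only [Finset.mem_sdiff, Finset.mem_Icc, Finset.mem_insert, Finset.mem_singleton]
    constructor
    · intro hx
      have hxI := hFsub hx
      rw [Finset.mem_Icc] at hxI
      refine ⟨hxI, ?_⟩
      rintro (rfl | rfl | rfl)
      exacts [ha1F hx, ha2F hx, ha3F hx]
    · rintro ⟨⟨h1, h2⟩, hne⟩
      by_contra hxF
      have hxT : x ∈ T := (hTmem x).mpr ⟨h1, h2, hxF⟩
      rcases hsub3 x hxT with rfl | rfl | rfl <;> tauto
  · rintro ⟨a1, a2, a3, h1I, h2I, h3I, h12, h23, hd1, hd2, hd3, rfl⟩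
    rw [Finset.mem_Icc] at h1I h2I h3I
    have hface : Finset.Icc 1 (2 * m + 1) \ {a1, a2, a3} ∈ cycComplex m := by
      refine ⟨Finset.sdiff_subset, ?_⟩
      intro i hi
      rw [Finset.mem_Icc] at hi
      rw [Finset.not_subset]
      have key : memCond m i a1 ∨ memCond m i a2 ∨ memCond m i a3 := by
        unfold memCond; omega
      have hnm : ∀ a : ℕ, a ∈ ({a1, a2, a3} : Finset ℕ) →
          a ∉ Finset.Icc 1 (2 * m + 1) \ {a1, a2, a3} := by
        intro a ha h
        exact (Finset.mem_sdiff.mp h).2 ha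
      rcases key with h | h | h
      · exact ⟨a1, (mem_cycInterval hi.1 hi.2 a1).mpr h, hnm a1 (by simp)⟩
      · exact ⟨a2, (mem_cycInterval hi.1 hi.2 a2).mpr h, hnm a2 (by simp)⟩
      · exact ⟨a3, (mem_cycInterval hi.1 hi.2 a3).mpr h, hnm a3 (by simp)⟩
    refine ⟨hface, ?_⟩
    rintro G ⟨hGsub, hGcov⟩ hFG
    -- a helper: an interval avoiding two of the aⱼ's and contained in G gives a contradiction
    have key : ∀ i, 1 ≤ i → i ≤ 2 * m + 1 → ∀ a, a ∈ G → a ∈ ({a1, a2, a3} : Finset ℕ) →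
        (∀ x, memCond m i x → 1 ≤ x ∧ x ≤ 2 * m + 1 ∧ (x ∉ ({a1, a2, a3} : Finset ℕ) ∨ x = a)) →
        False := by
      intro i hi1 hi2 a haG haA havoid
      refine hGcov i (Finset.mem_Icc.mpr ⟨hi1, hi2⟩) ?_
      intro x hx
      rw [mem_cycInterval hi1 hi2] at hx
      obtain ⟨hx1, hx2, hx3⟩ := havoid x hx
      rcases hx3 with hx3 | rfl
      · exact hFG (Finset.mem_sdiff.mpr ⟨Finset.mem_Icc.mpr ⟨hx1, hx2⟩, hx3⟩)
      · exact haG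
    have hmem123 : ∀ x : ℕ, x ∈ ({a1, a2, a3} : Finset ℕ) ↔ (x = a1 ∨ x = a2 ∨ x = a3) := by
      intro x
      simp [Finset.mem_insert]
    have hna1 : a1 ∉ G := by
      intro haG
      rcases le_or_gt a3 (2 * m) with h3 | h3
      · refine key (a3 + 1) (by omega) (by omega) a1 haG (by simp) ?_
        intro x hx
        unfold memCond at hx
        rw [hmem123]
        omega
      · refine key 1 (le_refl 1) (by omega) a1 haG (by simp) ?_
        intro x hx
        unfold memCond at hx
        rw [hmem123]
        omega
    have hna2 : a2 ∉ G := by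
      intro haG
      refine key (a1 + 1) (by omega) (by omega) a2 haG (by simp) ?_
      intro x hx
      unfold memCond at hx
      rw [hmem123]
      omega
    have hna3 : a3 ∉ G := by
      intro haG
      refine key (a2 + 1) (by omega) (by omega) a3 haG (by simp) ?_
      intro x hx
      unfold memCond at hx
      rw [hmem123]
      omega
    apply Finset.Subset.antisymm hFG
    intro x hxG
    have hxI := hGsub hxG
    rw [Finset.mem_sdiff]
    refine ⟨hxI, ?_⟩
    rw [hmem123]
    rintro (rfl | rfl | rfl)
    exacts [hna1 hxG, hna2 hxG, hna3 hxG]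
end

section
/- Let Δ be the simplicial complex on [2m+1] whose faces are the subsets F such that no cyclic interval {i, i+1, ..., i+m-1} (indices mod 2m+1) is contained in F. Then Δ is shellable with respect to the lexicographic order on its facets: for any two facets F = F(a_1,a_2,a_3) and G = F(b_1,b_2,b_3) with F < G in lexicographic order, there exists c ∈ G\F and a facet H with H < G and G\H = {c}. -/
/-- The facet `F(a₁,a₂,a₃) = [2m+1] \ {a₁,a₂,a₃}` of the cyclic complex. -/
def fct (m a₁ a₂ a₃ : ℕ) : Finset ℕ :=
  Finset.Icc 1 (2 * m + 1) \ {a₁, a₂, a₃}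

/-- `(a₁,a₂,a₃)` parametrizes a facet of the complex `Δ` on `[2m+1]` whose faces are
the subsets containing no cyclic interval `{i,…,i+m-1}` (indices mod `2m+1`). -/
def IsFacetTriple (m a₁ a₂ a₃ : ℕ) : Prop :=
  a₁ ∈ Finset.Icc 1 (2 * m + 1) ∧ a₂ ∈ Finset.Icc 1 (2 * m + 1) ∧
    a₃ ∈ Finset.Icc 1 (2 * m + 1) ∧ a₁ < a₂ ∧ a₂ < a₃ ∧
    a₂ - a₁ < m + 1 ∧ a₃ - a₂ < m + 1 ∧ a₃ - a₁ > m

/-- The lexicographic order on facets: `F(a₁,a₂,a₃) < F(b₁,b₂,b₃)` iff `b₁ < a₁`, or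
`b₁ = a₁` and `b₂ < a₂`, or `b₁ = a₁`, `b₂ = a₂` and `b₃ < a₃`. -/
def lexLt (a₁ a₂ a₃ b₁ b₂ b₃ : ℕ) : Prop :=
  b₁ < a₁ ∨ (b₁ = a₁ ∧ b₂ < a₂) ∨ (b₁ = a₁ ∧ b₂ = a₂ ∧ b₃ < a₃)

/-- Auxiliary: packaging of one exchange step. -/
lemma exchange_step (m a₁ a₂ a₃ b₁ b₂ b₃ c x y z : ℕ)
    (hk : 1 ≤ x ∧ x < y ∧ y < z ∧ z ≤ 2 * m + 1 ∧
      y ≤ x + m ∧ z ≤ y + m ∧ x + m + 1 ≤ z ∧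
      (b₁ < x ∨ (b₁ = x ∧ b₂ < y) ∨ (b₁ = x ∧ b₂ = y ∧ b₃ < z)) ∧
      (c = a₁ ∨ c = a₂ ∨ c = a₃) ∧ c ≠ b₁ ∧ c ≠ b₂ ∧ c ≠ b₃ ∧
      (x = b₁ ∨ x = b₂ ∨ x = b₃ ∨ x = c) ∧
      (y = b₁ ∨ y = b₂ ∨ y = b₃ ∨ y = c) ∧
      (z = b₁ ∨ z = b₂ ∨ z = b₃ ∨ z = c) ∧
      (c = x ∨ c = y ∨ c = z)) :
    ∃ c ∈ fct m b₁ b₂ b₃ \ fct m a₁ a₂ a₃,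
      ∃ h₁ h₂ h₃ : ℕ, IsFacetTriple m h₁ h₂ h₃ ∧ lexLt h₁ h₂ h₃ b₁ b₂ b₃ ∧
        fct m b₁ b₂ b₃ \ fct m h₁ h₂ h₃ = {c} := by
  refine ⟨c, ?_, x, y, z, ?_, ?_, ?_⟩
  · simp only [fct, Finset.mem_sdiff, Finset.mem_Icc, Finset.mem_insert,
      Finset.mem_singleton]
    omega
  · simp only [IsFacetTriple, Finset.mem_Icc]; omega
  · unfold lexLt; omega
  · ext n
    simp only [fct, Finset.mem_sdiff, Finset.mem_Icc, Finset.mem_insert,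
      Finset.mem_singleton]
    omega

/-- the cyclic complex is shellable with respect to the lexicographic
order on its facets: for facets `F = F(a₁,a₂,a₃) < G = F(b₁,b₂,b₃)` there exist
`c ∈ G \ F` and a facet `H < G` with `G \ H = {c}`. -/
theorem cyclic_gorenstein_complex_shellable (m : ℕ) (hm : 1 ≤ m)
    (a₁ a₂ a₃ b₁ b₂ b₃ : ℕ)
    (ha : IsFacetTriple m a₁ a₂ a₃) (hb : IsFacetTriple m b₁ b₂ b₃)
    (hlt : lexLt a₁ a₂ a₃ b₁ b₂ b₃) :
    ∃ c ∈ fct m b₁ b₂ b₃ \ fct m a₁ a₂ a₃,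
      ∃ h₁ h₂ h₃ : ℕ, IsFacetTriple m h₁ h₂ h₃ ∧ lexLt h₁ h₂ h₃ b₁ b₂ b₃ ∧
        fct m b₁ b₂ b₃ \ fct m h₁ h₂ h₃ = {c} := by
  simp only [IsFacetTriple, Finset.mem_Icc] at ha hb
  unfold lexLt at hlt
  by_cases h1 : b₁ = a₁
  · by_cases h2 : b₂ = a₂
    · -- take H = F itself, c = a₃
      exact exchange_step m a₁ a₂ a₃ b₁ b₂ b₃ a₃ a₁ a₂ a₃ (by omega)
    · -- rule 1: c = a₂, H = (b₁, a₂, b₃)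
      exact exchange_step m a₁ a₂ a₃ b₁ b₂ b₃ a₂ b₁ a₂ b₃ (by omega)
  · -- here b₁ < a₁
    by_cases h3 : b₂ ≤ a₁
    · -- rule 4: c = a₃, H = (b₂, b₃, a₃)
      exact exchange_step m a₁ a₂ a₃ b₁ b₂ b₃ a₃ b₂ b₃ a₃ (by omega)
    · by_cases h4 : a₁ + m + 1 ≤ b₃
      · -- rule 3: c = a₁, H = (a₁, b₂, b₃)
        exact exchange_step m a₁ a₂ a₃ b₁ b₂ b₃ a₁ a₁ b₂ b₃ (by omega)
      · by_cases h5 : a₃ ≤ b₂ + m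
        · -- rule 2: c = a₃, H = (b₁, b₂, a₃)
          exact exchange_step m a₁ a₂ a₃ b₁ b₂ b₃ a₃ b₁ b₂ a₃ (by omega)
        · -- rule 4: c = a₃, H = (b₂, b₃, a₃)
          exact exchange_step m a₁ a₂ a₃ b₁ b₂ b₃ a₃ b₂ b₃ a₃ (by omega)
end

section
/- Let I ⊂ S be a monomial ideal. Then S/I admits a squarefree Stanley decomposition if and only if I is a squarefree monomial ideal. -/
/-- Monomials of the Stanley space `u K[Z]`. -/
def stanleySet {n : ℕ} (u : Fin n →₀ ℕ) (Z : Finset (Fin n)) : Set (Fin n →₀ ℕ) :=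
  {a | ∃ v : Fin n →₀ ℕ, (v.support : Set (Fin n)) ⊆ (Z : Set (Fin n)) ∧ a = u + v}

/-- The squarefree monomial `x_F` (exponent vector of the indicator of `F`). -/
noncomputable def sqInd {n : ℕ} (F : Finset (Fin n)) : Fin n →₀ ℕ :=
  Finsupp.indicator F (fun _ _ => 1)

lemma sqInd_apply {n : ℕ} (F : Finset (Fin n)) (i : Fin n) :
    sqInd F i = if i ∈ F then 1 else 0 := by
  simp [sqInd, Finsupp.indicator_apply]

lemma sqInd_support {n : ℕ} (F : Finset (Fin n)) : (sqInd F).support = F := by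
  ext i; simp [sqInd, Finsupp.indicator_apply]

lemma sqInd_le_self {n : ℕ} (a : Fin n →₀ ℕ) : sqInd a.support ≤ a := by
  refine Finsupp.le_def.mpr fun i => ?_
  rw [sqInd_apply]
  by_cases h : i ∈ a.support
  · simpa [h] using Nat.one_le_iff_ne_zero.mpr (Finsupp.mem_support_iff.mp h)
  · simp [h]

/-- Membership in a squarefree Stanley set with `F ⊆ Z`. -/
lemma mem_stanley {n : ℕ} {F Z : Finset (Fin n)} (hFZ : F ⊆ Z) (a : Fin n →₀ ℕ) :
    a ∈ stanleySet (sqInd F) Z ↔ F ⊆ a.support ∧ a.support ⊆ Z := by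
  constructor
  · rintro ⟨v, hv, rfl⟩
    constructor
    · intro i hi
      have : 1 ≤ sqInd F i := by simp [sqInd_apply, hi]
      exact Finsupp.mem_support_iff.mpr (by have := Finsupp.add_apply (sqInd F) v i; omega)
    · intro i hi
      have hi' := Finsupp.mem_support_iff.mp hi
      rw [Finsupp.add_apply] at hi'
      by_cases h : sqInd F i = 0
      · have : v i ≠ 0 := by omega
        exact hv (Finsupp.mem_support_iff.mpr this)
      · have : i ∈ F := by by_contra hc; simp [sqInd_apply, hc] at h
        exact hFZ this
  · rintro ⟨h1, h2⟩
    have hle : sqInd F ≤ a := by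
      refine Finsupp.le_def.mpr fun i => ?_
      rw [sqInd_apply]
      by_cases h : i ∈ F
      · simpa [h] using Nat.one_le_iff_ne_zero.mpr (Finsupp.mem_support_iff.mp (h1 h))
      · simp [h]
    refine ⟨a - sqInd F, ?_, (add_tsub_cancel_of_le hle).symm⟩
    intro i hi
    have hi' := Finsupp.mem_support_iff.mp hi
    rw [Finsupp.tsub_apply] at hi'
    exact h2 (Finsupp.mem_support_iff.mpr (by omega))

/-- a monomial ideal `I` (with monomial set `M`) admits a squarefree
Stanley decomposition of `S/I`, i.e. a presentation of `Mon(I^c)` as a finite disjoint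
union of squarefree Stanley sets `x_F K[Z]` with `F ⊆ Z`, iff `I` is a squarefree
monomial ideal, i.e. `I` is generated by squarefree monomials. -/
theorem squarefree_stanley_decomposition_iff_squarefree
    {n : ℕ} (M : Set (Fin n →₀ ℕ)) (hM : ∀ a ∈ M, ∀ b, a + b ∈ M) :
    (∃ (r : ℕ) (F Z : Fin r → Finset (Fin n)),
        (∀ i, F i ⊆ Z i) ∧
        (Pairwise fun i j =>
          Disjoint (stanleySet (sqInd (F i)) (Z i)) (stanleySet (sqInd (F j)) (Z j))) ∧
        (⋃ i, stanleySet (sqInd (F i)) (Z i)) = Mᶜ) ↔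
      (∃ G : Set (Fin n →₀ ℕ), (∀ g ∈ G, ∀ i, g i ≤ 1) ∧
        M = {a | ∃ g ∈ G, g ≤ a}) := by
  constructor
  · rintro ⟨r, F, Z, hFZ, -, hunion⟩
    -- key: a ∈ M → sqInd a.support ∈ M
    have key : ∀ a ∈ M, sqInd a.support ∈ M := by
      intro a ha
      by_contra hc
      have : sqInd a.support ∈ (⋃ i, stanleySet (sqInd (F i)) (Z i)) := by
        rw [hunion]; exact hc
      obtain ⟨i, hi⟩ := Set.mem_iUnion.mp this
      rw [mem_stanley (hFZ i), sqInd_support] at hi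
      have : a ∈ (⋃ i, stanleySet (sqInd (F i)) (Z i)) :=
        Set.mem_iUnion.mpr ⟨i, (mem_stanley (hFZ i) a).mpr hi⟩
      rw [hunion] at this
      exact this ha
    refine ⟨{g | g ∈ M ∧ ∀ i, g i ≤ 1}, fun g hg => hg.2, ?_⟩
    ext a
    constructor
    · intro ha
      refine ⟨sqInd a.support, ⟨key a ha, fun i => ?_⟩, sqInd_le_self a⟩
      rw [sqInd_apply]; split <;> omega
    · rintro ⟨g, ⟨hgM, -⟩, hga⟩
      obtain ⟨c, rfl⟩ := le_iff_exists_add.mp hga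
      exact hM g hgM c
  · rintro ⟨G, hG1, rfl⟩
    classical
    -- a ∈ M iff sqInd a.support ∈ M
    have key : ∀ a : Fin n →₀ ℕ,
        (∃ g ∈ G, g ≤ a) ↔ (∃ g ∈ G, g ≤ sqInd a.support) := by
      intro a
      constructor
      · rintro ⟨g, hg, hga⟩
        refine ⟨g, hg, Finsupp.le_def.mpr fun i => ?_⟩
        rw [sqInd_apply]
        by_cases h : i ∈ a.support
        · simpa [h] using hG1 g hg i
        · have : a i = 0 := by simpa [Finsupp.mem_support_iff] using h
          have := Finsupp.le_def.mp hga i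
          simp [h]; omega
      · rintro ⟨g, hg, hga⟩
        exact ⟨g, hg, hga.trans (sqInd_le_self a)⟩
    set s : Finset (Finset (Fin n)) :=
      Finset.univ.filter (fun F => ¬ ∃ g ∈ G, g ≤ sqInd F) with hs
    have mem_s : ∀ T : Finset (Fin n), T ∈ s ↔ ¬ ∃ g ∈ G, g ≤ sqInd T := by
      intro T; rw [hs]; simp
    refine ⟨s.card, fun i => (s.equivFin.symm i : Finset (Fin n)),
      fun i => (s.equivFin.symm i : Finset (Fin n)), fun i => le_refl _, ?_, ?_⟩
    · -- disjointness
      intro i j hij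
      rw [Set.disjoint_left]
      intro a hi hj
      rw [mem_stanley (le_refl _)] at hi hj
      have h1 : a.support = (s.equivFin.symm i : Finset (Fin n)) :=
        le_antisymm hi.2 hi.1
      have h2 : a.support = (s.equivFin.symm j : Finset (Fin n)) :=
        le_antisymm hj.2 hj.1
      have : s.equivFin.symm i = s.equivFin.symm j := Subtype.ext (h1 ▸ h2)
      exact hij (s.equivFin.symm.injective this)
    · ext a
      simp only [Set.mem_iUnion, Set.mem_compl_iff, Set.mem_setOf_eq]
      constructor
      · rintro ⟨i, hi⟩
        rw [mem_stanley (le_refl _)] at hi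
        have hsupp : a.support = (s.equivFin.symm i : Finset (Fin n)) :=
          le_antisymm hi.2 hi.1
        have hmem := (mem_s _).mp (s.equivFin.symm i).2
        have h3 : ¬ ∃ g ∈ G, g ≤ sqInd a.support := by rw [hsupp]; exact hmem
        exact fun h => h3 ((key a).mp h)
      · intro ha
        rw [key a] at ha
        have hmem : a.support ∈ s := (mem_s _).mpr ha
        refine ⟨s.equivFin ⟨a.support, hmem⟩, ?_⟩
        rw [mem_stanley (le_refl _)]
        simp
end

section
/- Let I ⊂ S be a monomial ideal such that S/I admits a Stanley decomposition ⊕_i u_i K[Z_i] in which every u_i is squarefree and supp(u_i) ⊆ Z_i. Then I is a squarefree monomial ideal. -/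
/-- if a monomial ideal `I` (monomial set `M`) admits a Stanley
decomposition `⊕ᵢ uᵢ K[Zᵢ]` of `S/I` in which every `uᵢ` is squarefree with
`supp(uᵢ) ⊆ Zᵢ`, then `I` is a squarefree monomial ideal (generated by squarefree
monomials). -/
theorem squarefree_of_squarefree_stanley_decomposition
    {n r : ℕ} (M : Set (Fin n →₀ ℕ)) (hM : ∀ a ∈ M, ∀ b, a + b ∈ M)
    (u : Fin r → (Fin n →₀ ℕ)) (Z : Fin r → Finset (Fin n))
    (hsq : ∀ i, ∀ j : Fin n, u i j ≤ 1)
    (hsupp : ∀ i, ((u i).support : Set (Fin n)) ⊆ (Z i : Set (Fin n)))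
    (hdisj : Pairwise fun i j => Disjoint (stanleySet (u i) (Z i)) (stanleySet (u j) (Z j)))
    (hcover : (⋃ i, stanleySet (u i) (Z i)) = Mᶜ) :
    ∃ G : Set (Fin n →₀ ℕ), (∀ g ∈ G, ∀ i, g i ≤ 1) ∧ M = {a | ∃ g ∈ G, g ≤ a} := by
  classical
  -- the squarefree part (support indicator) of a monomial
  set σ : (Fin n →₀ ℕ) → (Fin n →₀ ℕ) :=
    fun a => a.mapRange (fun x => min x 1) (by simp) with hσdef
  have hσapp : ∀ a j, σ a j = min (a j) 1 := by
    intro a j; simp [hσdef, Finsupp.mapRange_apply]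
  have hσle : ∀ a, σ a ≤ a := by
    intro a; intro j; rw [hσapp]; exact min_le_left _ _
  -- key: if `σ a ∉ M` then `a ∉ M`
  have key : ∀ a, a ∈ M → σ a ∈ M := by
    intro a ha
    by_contra hσ
    have hmem : σ a ∈ ⋃ i, stanleySet (u i) (Z i) := by
      rw [hcover]; exact hσ
    obtain ⟨i, v, hv, heq⟩ := by
      simpa [stanleySet, Set.mem_iUnion] using hmem
    -- show `a` itself lies in the Stanley set `u i K[Z i]`, contradiction
    have hle : u i ≤ a := by
      intro j
      have h1 : u i j + v j = min (a j) 1 := by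
        rw [← hσapp, heq]; rfl
      have : u i j ≤ min (a j) 1 := by omega
      exact le_trans this (min_le_left _ _)
    have ha' : a ∈ stanleySet (u i) (Z i) := by
      refine ⟨a - u i, ?_, (add_tsub_cancel_of_le hle).symm⟩
      intro j hj
      simp only [Finset.coe_subset, Finset.mem_coe, Finsupp.mem_support_iff] at hj ⊢
      have hj' : a j - u i j ≠ 0 := by
        simpa [Finsupp.tsub_apply] using hj
      have haj : a j ≠ 0 := by omega
      have h1 : u i j + v j = min (a j) 1 := by
        rw [← hσapp, heq]; rfl
      have : u i j ≠ 0 ∨ v j ≠ 0 := by omega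
      rcases this with h | h
      · exact hsupp i (by simpa [Finsupp.mem_support_iff] using h)
      · exact hv (by simpa [Finsupp.mem_support_iff] using h)
    have : a ∈ Mᶜ := by
      rw [← hcover]; exact Set.mem_iUnion.mpr ⟨i, ha'⟩
    exact this ha
  refine ⟨{g | g ∈ M ∧ ∀ j, g j ≤ 1}, fun g hg => hg.2, ?_⟩
  ext a
  constructor
  · intro ha
    refine ⟨σ a, ⟨key a ha, fun j => by rw [hσapp]; exact min_le_right _ _⟩, hσle a⟩
  · rintro ⟨g, ⟨hgM, -⟩, hga⟩
    have := hM g hgM (a - g)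
    rwa [add_tsub_cancel_of_le hga] at this
end

section
/- Let Δ_1, Δ_2 be d-dimensional partitionable simplicial complexes with nice partitions Δ_1 = ⋃_{i=1}^r [K_i,L_i] and Δ_2 = ⋃_{i=1}^s [F_i,G_i], and let Γ = Δ_1 ∩ Δ_2. Suppose for each i the set [F_i,G_i]\Γ has a unique minimal element H_i. Then Δ_1 ∪ Δ_2 = ⋃_{i=1}^r [K_i,L_i] ∪ ⋃_{i=1}^s [H_i,G_i] is a nice partition of Δ_1 ∪ Δ_2. -/
/-- let `Δ₁, Δ₂` be `d`-dimensional partitionable simplicial complexes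
with nice partitions `Δ₁ = ⋃ᵢ [Kᵢ,Lᵢ]`, `Δ₂ = ⋃ᵢ [Fᵢ,Gᵢ]`, and `Γ = Δ₁ ∩ Δ₂`.
If each `[Fᵢ,Gᵢ] \ Γ` has a unique minimal element `Hᵢ`, then
`Δ₁ ∪ Δ₂ = ⋃ᵢ [Kᵢ,Lᵢ] ∪ ⋃ᵢ [Hᵢ,Gᵢ]` is a nice partition of `Δ₁ ∪ Δ₂`. -/
theorem glue_nice_partitions
    {n d r s : ℕ} (Δ₁ Δ₂ : Set (Finset (Fin n)))
    (hΔ₁ : ∀ F ∈ Δ₁, ∀ G : Finset (Fin n), G ⊆ F → G ∈ Δ₁)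
    (hΔ₂ : ∀ F ∈ Δ₂, ∀ G : Finset (Fin n), G ⊆ F → G ∈ Δ₂)
    (hdim₁ : ∀ F ∈ Δ₁, F.card ≤ d + 1)
    (hdim₂ : ∀ F ∈ Δ₂, F.card ≤ d + 1)
    (hpure₁ : ∀ F ∈ Δ₁, (∀ H ∈ Δ₁, F ⊆ H → F = H) → F.card = d + 1)
    (hpure₂ : ∀ F ∈ Δ₂, (∀ H ∈ Δ₂, F ⊆ H → F = H) → F.card = d + 1)
    (K L : Fin r → Finset (Fin n)) (F G : Fin s → Finset (Fin n))
    (hKL : ∀ i, K i ⊆ L i) (hFG : ∀ i, F i ⊆ G i)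
    (hLfacet : ∀ i, L i ∈ Δ₁ ∧ ∀ H ∈ Δ₁, L i ⊆ H → L i = H)
    (hGfacet : ∀ i, G i ∈ Δ₂ ∧ ∀ H ∈ Δ₂, G i ⊆ H → G i = H)
    (hpart₁ : ∀ M : Finset (Fin n), M ∈ Δ₁ ↔ ∃! i, K i ⊆ M ∧ M ⊆ L i)
    (hpart₂ : ∀ M : Finset (Fin n), M ∈ Δ₂ ↔ ∃! i, F i ⊆ M ∧ M ⊆ G i)
    (H : Fin s → Finset (Fin n))
    (hHmem : ∀ i, H i ∈ Δ₂ ∧ F i ⊆ H i ∧ H i ⊆ G i ∧ H i ∉ Δ₁ ∩ Δ₂)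
    (hHmin : ∀ i, ∀ M ∈ Δ₂, F i ⊆ M → M ⊆ G i → M ∉ Δ₁ ∩ Δ₂ → H i ⊆ M) :
    (∀ M : Finset (Fin n), M ∈ Δ₁ ∪ Δ₂ ↔
        ∃! p : Fin r ⊕ Fin s, Sum.elim K H p ⊆ M ∧ M ⊆ Sum.elim L G p) ∧
      (∀ p : Fin r ⊕ Fin s, Sum.elim L G p ∈ Δ₁ ∪ Δ₂ ∧
        ∀ M ∈ Δ₁ ∪ Δ₂, Sum.elim L G p ⊆ M → Sum.elim L G p = M) := by
  have caseA : ∀ M : Finset (Fin n), M ∈ Δ₁ →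
      ∃! p : Fin r ⊕ Fin s, Sum.elim K H p ⊆ M ∧ M ⊆ Sum.elim L G p := by
    intro M h1
    obtain ⟨i, ⟨hK, hL⟩, huniq⟩ := (hpart₁ M).1 h1
    refine ⟨Sum.inl i, ⟨hK, hL⟩, ?_⟩
    rintro (j | j) ⟨ha, hb⟩
    · simp only [Sum.elim_inl] at ha hb
      exact congrArg Sum.inl (huniq j ⟨ha, hb⟩)
    · simp only [Sum.elim_inr] at ha hb
      exfalso
      have hM2 : M ∈ Δ₂ := hΔ₂ (G j) (hGfacet j).1 M hb
      exact (hHmem j).2.2.2 ⟨hΔ₁ M h1 _ ha, hΔ₂ M hM2 _ ha⟩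
  have caseB : ∀ M : Finset (Fin n), M ∈ Δ₂ → M ∉ Δ₁ →
      ∃! p : Fin r ⊕ Fin s, Sum.elim K H p ⊆ M ∧ M ⊆ Sum.elim L G p := by
    intro M h2 h1
    obtain ⟨j, ⟨hF, hG⟩, huniq⟩ := (hpart₂ M).1 h2
    have hHM : H j ⊆ M := hHmin j M h2 hF hG (fun h => h1 h.1)
    refine ⟨Sum.inr j, ⟨hHM, hG⟩, ?_⟩
    rintro (j' | j') ⟨ha, hb⟩
    · simp only [Sum.elim_inl] at ha hb
      exact absurd (hΔ₁ (L j') (hLfacet j').1 M hb) h1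
    · simp only [Sum.elim_inr] at ha hb
      exact congrArg Sum.inr (huniq j' ⟨(hHmem j').2.1.trans ha, hb⟩)
  constructor
  · intro M
    constructor
    · rintro (h1 | h2)
      · exact caseA M h1
      · by_cases h1 : M ∈ Δ₁
        · exact caseA M h1
        · exact caseB M h2 h1
    · rintro ⟨(i | j), ⟨ha, hb⟩, -⟩
      · exact Or.inl (hΔ₁ (L i) (hLfacet i).1 M hb)
      · exact Or.inr (hΔ₂ (G j) (hGfacet j).1 M hb)
  · rintro (i | j)
    · refine ⟨Or.inl (hLfacet i).1, ?_⟩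
      rintro M (h1 | h2) hsub
      · exact (hLfacet i).2 M h1 hsub
      · exact Finset.eq_of_subset_of_card_le hsub
          ((hdim₂ M h2).trans_eq (hpure₁ (L i) (hLfacet i).1 (hLfacet i).2).symm)
    · refine ⟨Or.inr (hGfacet j).1, ?_⟩
      rintro M (h1 | h2) hsub
      · exact Finset.eq_of_subset_of_card_le hsub
          ((hdim₁ M h1).trans_eq (hpure₂ (G j) (hGfacet j).1 (hGfacet j).2).symm)
      · exact (hGfacet j).2 M h2 hsub
end
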